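/- In system D, every typing derivation can be transformed into a normal derivation, i.e. one in which an ∧-introduction is never immediately followed by an ∧-elimination, deriving the same judgment Γ ⊢ t : A. -/
import Mathlib


/-- Untyped λ-terms in de Bruijn representation. -/
inductive Term : Type
  | var : ℕ → Term
  | lam : Term → Term
  | app : Term → Term → Term
  deriving DecidableEq

namespace Term

/-- Shift (lift) all de Bruijn indices ≥ d by one. -/
def lift (d : ℕ) : Term → Term
  | var n => var (if n < d then n else n + 1)
  | lam t => lam (lift (d + 1) t)
  | app t u => app (lift d t) (lift d u)

/-- Capture-avoiding substitution `t[k := u]` (de Bruijn style). -/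
def subst : Term → ℕ → Term → Term
  | var n, k, u => if n = k then u else var (if n < k then n else n - 1)
  | lam t, k, u => lam (subst t (k + 1) (lift 0 u))
  | app t v, k, u => app (subst t k u) (subst v k u)

/-- Swap the de Bruijn indices d and d+1 (exchange of two adjacent binders). -/
def swap (d : ℕ) : Term → Term
  | var n => var (if n = d then d + 1 else if n = d + 1 then d else n)
  | lam t => lam (swap (d + 1) t)
  | app t u => app (swap d t) (swap d u)

end Term

/-- The four reduction rules. -/
inductive Rule | beta | delta | gamma | assoc

/-- One-step reduction by a given rule (closed under congruence).
β: (λx.M N) ▷ M[x:=N];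
δ: (λy.λx.M N) ▷ λx.(λy.M N), x ∉ FV(N);
γ: (λx.M N P) ▷ (λx.(M P) N), x ∉ FV(P);
assoc: (M (λx.N P)) ▷ (λx.(M N) P), x ∉ FV(M).
Freshness conditions are realized by lifting. -/
inductive Step : Rule → Term → Term → Prop
  | beta (M N) : Step .beta (.app (.lam M) N) (Term.subst M 0 N)
  | delta (M N) : Step .delta (.app (.lam (.lam M)) N)
      (.lam (.app (.lam (Term.swap 0 M)) (Term.lift 0 N)))
  | gamma (M N P) : Step .gamma (.app (.app (.lam M) N) P)
      (.app (.lam (.app M (Term.lift 0 P))) N)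
  | assoc (M N P) : Step .assoc (.app M (.app (.lam N) P))
      (.app (.lam (.app (Term.lift 0 M) N)) P)
  | appCongL {r t t'} (u) : Step r t t' → Step r (.app t u) (.app t' u)
  | appCongR {r u u'} (t) : Step r u u' → Step r (.app t u) (.app t u')
  | lamCong {r t t'} : Step r t t' → Step r (.lam t) (.lam t')

/-- One-step reduction by the union of the four rules. -/
def StepAll (t t' : Term) : Prop := ∃ r, Step r t t'

/-- Strong normalization for the union of β, δ, γ, assoc. -/
def SN (t : Term) : Prop := Acc (fun a b => StepAll b a) t

/-- Strong normalization for β alone. -/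
def SNbeta (t : Term) : Prop := Acc (fun a b => Step .beta b a) t

mutual
/-- Simple types: atoms and arrows with simple codomain. -/
inductive STy : Type
  | atom : ℕ → STy
  | arrow : Ty → STy → STy
/-- Types of system D: intersections of simple types. -/
inductive Ty : Type
  | simple : STy → Ty
  | inter : STy → Ty → Ty
end

/-- Typing judgment of system D (contexts are lists of types, de Bruijn). -/
inductive Typing : List Ty → Term → Ty → Prop
  | var {Γ n A} : Γ[n]? = some A → Typing Γ (.var n) A
  | app {Γ M N A B} : Typing Γ M (.simple (.arrow A B)) → Typing Γ N A →
      Typing Γ (.app M N) (.simple B)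
  | lam {Γ M A B} : Typing (A :: Γ) M (.simple B) →
      Typing Γ (.lam M) (.simple (.arrow A B))
  | interI {Γ M A B} : Typing Γ M (.simple A) → Typing Γ M B →
      Typing Γ M (.inter A B)
  | interE1 {Γ M A B} : Typing Γ M (.inter A B) → Typing Γ M (.simple A)
  | interE2 {Γ M A B} : Typing Γ M (.inter A B) → Typing Γ M B

/-- A term is typable in system D. -/
def Typable (t : Term) : Prop := ∃ Γ A, Typing Γ t A

/-- (H M₁ ... Mₙ). -/
def appList (H : Term) (Ms : List Term) : Term := Ms.foldl .app H

mutual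
/-- Normal derivations: ∧-intro never immediately followed by ∧-elim. -/
inductive NTyping : List Ty → Term → Ty → Prop
  | ni {Γ t A} : NTypingNI Γ t A → NTyping Γ t A
  | interI {Γ M A B} : NTyping Γ M (.simple A) → NTyping Γ M B →
      NTyping Γ M (.inter A B)
/-- Normal derivations not ending with ∧-intro. -/
inductive NTypingNI : List Ty → Term → Ty → Prop
  | var {Γ n A} : Γ[n]? = some A → NTypingNI Γ (.var n) A
  | app {Γ M N A B} : NTyping Γ M (.simple (.arrow A B)) → NTyping Γ N A →
      NTypingNI Γ (.app M N) (.simple B)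
  | lam {Γ M A B} : NTyping (A :: Γ) M (.simple B) →
      NTypingNI Γ (.lam M) (.simple (.arrow A B))
  | interE1 {Γ M A B} : NTypingNI Γ M (.inter A B) → NTypingNI Γ M (.simple A)
  | interE2 {Γ M A B} : NTypingNI Γ M (.inter A B) → NTypingNI Γ M B
end

lemma NTyping.elim1 {Γ M A B} (h : NTyping Γ M (.inter A B)) :
    NTyping Γ M (.simple A) := by
  cases h with
  | ni h => exact .ni (.interE1 h)
  | interI h1 _ => exact h1

lemma NTyping.elim2 {Γ M A B} (h : NTyping Γ M (.inter A B)) :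
    NTyping Γ M B := by
  cases h with
  | ni h => exact .ni (.interE2 h)
  | interI _ h2 => exact h2

/-- Every derivation in system D can be normalized. -/
theorem normalize_derivation (Γ : List Ty) (t : Term) (A : Ty)
    (h : Typing Γ t A) : NTyping Γ t A := by
  induction h with
  | var h => exact .ni (.var h)
  | app _ _ ih1 ih2 => exact .ni (.app ih1 ih2)
  | lam _ ih => exact .ni (.lam ih)
  | interI _ _ ih1 ih2 => exact .interI ih1 ih2
  | interE1 _ ih => exact ih.elim1
  | interE2 _ ih => exact ih.elim2
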